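/- arXiv:1808.00731 — 5 statements merged into one kernel-verified Lean document; each statement's English description precedes it below -/
import Mathlib

section
/- Let ξ be an approximate design whose information matrix M(ξ) is nonsingular. If there exists a real symmetric positive semidefinite m×m matrix E with tr(E) = 1 such that tr(H(x) E) ≤ λ_1(M(ξ)) for all x ∈ X, then ξ is E-optimal. -/
open Matrix BigOperators Finset

/-- An approximate design on a finite design space `X`: nonnegative weights summing to 1. -/
def IsDesign {X : Type*} [Fintype X] (ξ : X → ℝ) : Prop :=
  (∀ x, 0 ≤ ξ x) ∧ ∑ x, ξ x = 1

/-- The information matrix `M(ξ) = ∑_x ξ(x) H(x)` of a design `ξ`. -/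
noncomputable def infoMatrix {X : Type*} [Fintype X] {m : ℕ}
    (H : X → Matrix (Fin m) (Fin m) ℝ) (ξ : X → ℝ) : Matrix (Fin m) (Fin m) ℝ :=
  ∑ x, ξ x • H x

/-- The smallest eigenvalue `λ₁(A)` of a real symmetric matrix `A`, expressed as the minimum
of the Rayleigh quotient `vᵀ A v` over unit vectors `v`. -/
noncomputable def lamMin {m : ℕ} (A : Matrix (Fin m) (Fin m) ℝ) : ℝ :=
  sInf {r : ℝ | ∃ v : Fin m → ℝ, v ⬝ᵥ v = 1 ∧ r = v ⬝ᵥ (A *ᵥ v)}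

/-- A design `ξ` is E-optimal if `λ₁(M(ξ)) ≥ λ₁(M(ξ'))` for every design `ξ'`. -/
def IsEOptimal {X : Type*} [Fintype X] {m : ℕ}
    (H : X → Matrix (Fin m) (Fin m) ℝ) (ξ : X → ℝ) : Prop :=
  IsDesign ξ ∧ ∀ ξ' : X → ℝ, IsDesign ξ' → lamMin (infoMatrix H ξ') ≤ lamMin (infoMatrix H ξ)

-- helper lemmas
lemma psd_trace_nonneg {m : ℕ} {A : Matrix (Fin m) (Fin m) ℝ} (hA : A.PosSemidef) :
    0 ≤ A.trace := by
  rw [Matrix.trace]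
  apply Finset.sum_nonneg
  intro i _
  have := hA.dotProduct_mulVec_nonneg (Pi.single i 1)
  simpa [Matrix.mulVec_single, Matrix.diag] using this

open scoped MatrixOrder in
lemma trace_mul_psd_nonneg {m : ℕ} {A B : Matrix (Fin m) (Fin m) ℝ}
    (hA : A.PosSemidef) (hB : B.PosSemidef) : 0 ≤ (A * B).trace := by
  have hs := (CFC.sqrt_nonneg A).posSemidef
  have h1 : A * B = CFC.sqrt A * (CFC.sqrt A * B) := by
    rw [← mul_assoc, CFC.sqrt_mul_sqrt_self A hA.nonneg]
  rw [h1, Matrix.trace_mul_comm]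
  have : (CFC.sqrt A * B * CFC.sqrt A).PosSemidef := by
    have := hB.conjTranspose_mul_mul_same (CFC.sqrt A)
    rwa [hs.1.eq] at this
  simpa [mul_assoc] using psd_trace_nonneg this

lemma psd_smul {m : ℕ} {A : Matrix (Fin m) (Fin m) ℝ} (hA : A.PosSemidef) {c : ℝ}
    (hc : 0 ≤ c) : (c • A).PosSemidef := by
  refine Matrix.PosSemidef.of_dotProduct_mulVec_nonneg (by rw [Matrix.IsHermitian, conjTranspose_smul, star_trivial, hA.1.eq]) fun v => ?_
  rw [smul_mulVec, dotProduct_smul]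
  exact mul_nonneg hc (hA.dotProduct_mulVec_nonneg v)

lemma infoMatrix_psd {X : Type*} [Fintype X] {m : ℕ} {H : X → Matrix (Fin m) (Fin m) ℝ}
    (hH : ∀ x, (H x).PosSemidef) {ξ : X → ℝ} (hξ : ∀ x, 0 ≤ ξ x) :
    (infoMatrix H ξ).PosSemidef := by
  unfold infoMatrix
  exact Finset.sum_induction _ _ (fun a b ha hb => ha.add hb) Matrix.PosSemidef.zero
    (fun x _ => psd_smul (hH x) (hξ x))

/-- For a PSD matrix `A`, `lamMin A ≤ vᵀ A v / (vᵀv)` scaled: `lamMin A * (v⬝ᵥv) ≤ v⬝ᵥ(A*ᵥv)`. -/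
lemma lamMin_le_rayleigh {m : ℕ} {A : Matrix (Fin m) (Fin m) ℝ} (hA : A.PosSemidef)
    (v : Fin m → ℝ) : lamMin A * (v ⬝ᵥ v) ≤ v ⬝ᵥ (A *ᵥ v) := by
  have hbdd : BddBelow {r : ℝ | ∃ v : Fin m → ℝ, v ⬝ᵥ v = 1 ∧ r = v ⬝ᵥ (A *ᵥ v)} := by
    refine ⟨0, fun r hr => ?_⟩
    obtain ⟨w, -, rfl⟩ := hr
    simpa using hA.dotProduct_mulVec_nonneg w
  by_cases hv : v ⬝ᵥ v = 0
  · have hv0 : v = 0 := by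
      have : ∀ i, v i = 0 := by
        intro i
        have h2 : ∑ j, v j * v j = 0 := hv
        have := (Finset.sum_eq_zero_iff_of_nonneg (fun j _ => mul_self_nonneg (v j))).mp h2
          i (Finset.mem_univ i)
        exact mul_self_eq_zero.mp this
      funext i; exact this i
    simp [hv0, hv]
  · have hnn : 0 ≤ v ⬝ᵥ v := Finset.sum_nonneg fun i _ => mul_self_nonneg (v i)
    have hpos : 0 < v ⬝ᵥ v := lt_of_le_of_ne hnn (Ne.symm hv)
    set c := v ⬝ᵥ v with hc
    set u : Fin m → ℝ := (Real.sqrt c)⁻¹ • v with hu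
    have hsq : (Real.sqrt c)⁻¹ * (Real.sqrt c)⁻¹ = c⁻¹ := by
      rw [← mul_inv, Real.mul_self_sqrt hpos.le]
    have huu : u ⬝ᵥ u = 1 := by
      rw [hu, smul_dotProduct, dotProduct_smul, smul_eq_mul, smul_eq_mul, ← mul_assoc, hsq]
      exact inv_mul_cancel₀ hv
    have hmem : u ⬝ᵥ (A *ᵥ u) ∈ {r : ℝ | ∃ w : Fin m → ℝ, w ⬝ᵥ w = 1 ∧ r = w ⬝ᵥ (A *ᵥ w)} :=
      ⟨u, huu, rfl⟩
    have hle : lamMin A ≤ u ⬝ᵥ (A *ᵥ u) := csInf_le hbdd hmem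
    have hval : u ⬝ᵥ (A *ᵥ u) = c⁻¹ * (v ⬝ᵥ (A *ᵥ v)) := by
      rw [hu, smul_dotProduct, mulVec_smul, dotProduct_smul, smul_eq_mul, smul_eq_mul,
        ← mul_assoc, hsq]
    rw [hval] at hle
    calc lamMin A * c ≤ (c⁻¹ * (v ⬝ᵥ (A *ᵥ v))) * c := by
          exact mul_le_mul_of_nonneg_right hle hpos.le
      _ = v ⬝ᵥ (A *ᵥ v) := by field_simp

lemma psd_sub_lamMin {m : ℕ} {A : Matrix (Fin m) (Fin m) ℝ} (hA : A.PosSemidef) :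
    (A - lamMin A • 1).PosSemidef := by
  refine Matrix.PosSemidef.of_dotProduct_mulVec_nonneg ?_ ?_
  · rw [Matrix.IsHermitian, conjTranspose_sub, conjTranspose_smul, star_trivial,
      conjTranspose_one, hA.1.eq]
  · intro v
    have h := lamMin_le_rayleigh hA v
    have h2 : (star v) ⬝ᵥ ((A - lamMin A • 1) *ᵥ v)
        = v ⬝ᵥ (A *ᵥ v) - lamMin A * (v ⬝ᵥ v) := by
      rw [star_trivial, Matrix.sub_mulVec, dotProduct_sub, smul_mulVec, one_mulVec,
        dotProduct_smul, smul_eq_mul]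
    rw [h2]
    linarith

lemma lamMin_le_trace_mul {m : ℕ} {A E : Matrix (Fin m) (Fin m) ℝ} (hA : A.PosSemidef)
    (hE : E.PosSemidef) (hEtr : E.trace = 1) : lamMin A ≤ (A * E).trace := by
  have h := trace_mul_psd_nonneg (psd_sub_lamMin hA) hE
  have heq : ((A - lamMin A • 1) * E).trace = (A * E).trace - lamMin A := by
    rw [Matrix.sub_mul, Matrix.smul_mul, Matrix.one_mul, trace_sub, trace_smul, smul_eq_mul,
      hEtr, mul_one]
  rw [heq] at h
  linarith


/-- if `M(ξ)` is nonsingular and there is a positive semidefinite matrix `E` with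
`tr(E) = 1` such that `tr(H(x) E) ≤ λ₁(M(ξ))` for all `x ∈ X`, then `ξ` is E-optimal. -/
theorem stmt_1 {X : Type*} [Fintype X] [Nonempty X] {m : ℕ} (hm : 1 ≤ m)
    (H : X → Matrix (Fin m) (Fin m) ℝ) (hH : ∀ x, (H x).PosSemidef)
    (ξ : X → ℝ) (hξ : IsDesign ξ) (hns : (infoMatrix H ξ).det ≠ 0)
    (E : Matrix (Fin m) (Fin m) ℝ) (hE : E.PosSemidef) (hEtr : E.trace = 1)
    (hEle : ∀ x, (H x * E).trace ≤ lamMin (infoMatrix H ξ)) :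
    IsEOptimal H ξ := by

  refine ⟨hξ, fun ξ' hξ' => ?_⟩
  have hpsd' : (infoMatrix H ξ').PosSemidef := infoMatrix_psd hH hξ'.1
  have h1 : lamMin (infoMatrix H ξ') ≤ (infoMatrix H ξ' * E).trace :=
    lamMin_le_trace_mul hpsd' hE hEtr
  have h2 : (infoMatrix H ξ' * E).trace = ∑ x, ξ' x * (H x * E).trace := by
    rw [infoMatrix, Finset.sum_mul, trace_sum]
    congr 1; funext x
    rw [Matrix.smul_mul, trace_smul, smul_eq_mul]
  have h3 : ∑ x, ξ' x * (H x * E).trace ≤ ∑ x, ξ' x * lamMin (infoMatrix H ξ) := by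
    apply Finset.sum_le_sum
    intro x _
    exact mul_le_mul_of_nonneg_left (hEle x) (hξ'.1 x)
  have h4 : ∑ x, ξ' x * lamMin (infoMatrix H ξ) = lamMin (infoMatrix H ξ) := by
    rw [← Finset.sum_mul, hξ'.2, one_mul]
  linarith [h1, h2 ▸ h1]
end

section
/- Let ξ be an approximate design whose information matrix M(ξ) is nonsingular. If ξ is E-optimal, then there exists a real symmetric positive semidefinite m×m matrix E with tr(E) = 1 such that tr(H(x) E) ≤ λ_1(M(ξ)) for all x ∈ X. -/
open Matrix BigOperators Finset

section Aux

attribute [local instance] Matrix.normedAddCommGroup Matrix.normedSpace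

variable {m : ℕ}

lemma vecMulVec_mulVec' (w x : Fin m → ℝ) : vecMulVec w w *ᵥ x = (w ⬝ᵥ x) • w := by
  ext i
  simp only [mulVec, dotProduct, vecMulVec_apply, Pi.smul_apply, smul_eq_mul, Finset.sum_mul]
  exact Finset.sum_congr rfl fun j _ => by ring

lemma vecMulVec_posSemidef (w : Fin m → ℝ) : (vecMulVec w w).PosSemidef := by
  rw [posSemidef_iff_dotProduct_mulVec]
  constructor
  · ext i j
    simp [vecMulVec_apply, conjTranspose_apply, mul_comm]
  · intro x
    rw [star_trivial, vecMulVec_mulVec', dotProduct_smul, smul_eq_mul, dotProduct_comm]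
    exact mul_self_nonneg _

lemma vecMulVec_trace (w : Fin m → ℝ) : (vecMulVec w w).trace = w ⬝ᵥ w := by
  simp [trace, Matrix.diag, vecMulVec_apply, dotProduct]

lemma trace_mul_vecMulVec (A : Matrix (Fin m) (Fin m) ℝ) (w : Fin m → ℝ) :
    (A * vecMulVec w w).trace = w ⬝ᵥ (A *ᵥ w) := by
  simp only [trace, Matrix.diag, mul_apply, vecMulVec_apply, dotProduct, mulVec,
    Finset.mul_sum]
  exact Finset.sum_congr rfl fun i _ => Finset.sum_congr rfl fun j _ => by ring

/-- The set of PSD matrices with trace 1. -/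
def Dset (m : ℕ) : Set (Matrix (Fin m) (Fin m) ℝ) :=
  {E | E.PosSemidef ∧ E.trace = 1}

lemma Dset_entry_bound {E : Matrix (Fin m) (Fin m) ℝ} (hE : E ∈ Dset m) (i j : Fin m) :
    |E i j| ≤ 1 := by
  obtain ⟨hpsd, htr⟩ := hE
  obtain ⟨hherm, hpos⟩ := posSemidef_iff_dotProduct_mulVec.mp hpsd
  have hsym : ∀ a b : Fin m, E a b = E b a := by
    intro a b
    have := congrFun (congrFun hherm b) a
    simpa [conjTranspose_apply] using this
  have hdiag : ∀ a : Fin m, 0 ≤ E a a := by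
    intro a
    have := hpos (Pi.single a 1)
    simpa [star_trivial, single_dotProduct, mulVec_single] using this
  have hdiag_le : ∀ a : Fin m, E a a ≤ 1 := by
    intro a
    rw [← htr]
    exact Finset.single_le_sum (fun b _ => hdiag b) (Finset.mem_univ a)
  have hquad : ∀ a b : ℝ,
      0 ≤ a * (E i i * a) + b * (E j i * a) + (a * (E i j * b) + b * (E j j * b)) := by
    intro a b
    have := hpos (Pi.single i a + Pi.single j b)
    simp [star_trivial, add_dotProduct, dotProduct_add, mulVec_add, mulVec_single,
      single_dotProduct, dotProduct_single, mul_add, add_mul] at this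
    linarith
  rcases eq_or_ne i j with rfl | hij
  · rw [abs_le]; constructor
    · linarith [hdiag i]
    · exact hdiag_le i
  · rw [abs_le]
    constructor
    · have := hquad 1 1
      have hs := hsym j i
      have h1 := hdiag_le i
      have h2 := hdiag_le j
      nlinarith
    · have := hquad 1 (-1)
      have hs := hsym j i
      have h1 := hdiag_le i
      have h2 := hdiag_le j
      nlinarith

lemma Dset_isCompact : IsCompact (Dset m) := by
  have hsub : Dset m ⊆ Metric.closedBall (0 : Matrix (Fin m) (Fin m) ℝ) 1 := by
    intro E hE
    rw [Metric.mem_closedBall, dist_zero_right]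
    rw [Matrix.norm_le_iff (by norm_num : (0:ℝ) ≤ 1)]
    intro i j
    simpa [Real.norm_eq_abs] using Dset_entry_bound hE i j
  have hclosed : IsClosed (Dset m) := by
    have h1 : IsClosed {E : Matrix (Fin m) (Fin m) ℝ | E.IsHermitian} := by
      have : {E : Matrix (Fin m) (Fin m) ℝ | E.IsHermitian} =
          {E | Eᴴ = E} := rfl
      rw [this]
      exact isClosed_eq (continuous_id.matrix_conjTranspose) continuous_id
    have h2 : IsClosed {E : Matrix (Fin m) (Fin m) ℝ |
        ∀ x : Fin m → ℝ, 0 ≤ star x ⬝ᵥ (E *ᵥ x)} := by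
      have : {E : Matrix (Fin m) (Fin m) ℝ | ∀ x : Fin m → ℝ, 0 ≤ star x ⬝ᵥ (E *ᵥ x)} =
          ⋂ x : Fin m → ℝ, {E | 0 ≤ star x ⬝ᵥ (E *ᵥ x)} := by
        ext E; simp
      rw [this]
      refine isClosed_iInter fun x => isClosed_le continuous_const ?_
      exact continuous_const.dotProduct (continuous_id.matrix_mulVec continuous_const)
    have h3 : IsClosed {E : Matrix (Fin m) (Fin m) ℝ | E.trace = 1} :=
      isClosed_eq (continuous_id.matrix_trace) continuous_const
    have : Dset m = ({E : Matrix (Fin m) (Fin m) ℝ | E.IsHermitian} ∩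
        {E | ∀ x : Fin m → ℝ, 0 ≤ star x ⬝ᵥ (E *ᵥ x)}) ∩ {E | E.trace = 1} := by
      ext E
      constructor
      · rintro ⟨hp, hc⟩; exact ⟨posSemidef_iff_dotProduct_mulVec.mp hp, hc⟩
      · rintro ⟨⟨ha, hb⟩, hc⟩; exact ⟨posSemidef_iff_dotProduct_mulVec.mpr ⟨ha, hb⟩, hc⟩
    rw [this]
    exact ((h1.inter h2).inter h3)
  exact (isCompact_closedBall _ _).of_isClosed_subset hclosed hsub

lemma Dset_convex : Convex ℝ (Dset m) := by
  rintro E ⟨hE, hEt⟩ F ⟨hF, hFt⟩ a b ha hb hab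
  obtain ⟨hEh, hEp⟩ := posSemidef_iff_dotProduct_mulVec.mp hE
  obtain ⟨hFh, hFp⟩ := posSemidef_iff_dotProduct_mulVec.mp hF
  refine ⟨posSemidef_iff_dotProduct_mulVec.mpr ⟨?_, ?_⟩, ?_⟩
  · show (a • E + b • F)ᴴ = a • E + b • F
    rw [conjTranspose_add, conjTranspose_smul, conjTranspose_smul]
    simp only [star_trivial]
    rw [hEh, hFh]
  · intro x
    have h1 := hEp x
    have h2 := hFp x
    rw [add_mulVec, smul_mulVec, smul_mulVec, dotProduct_add,
      dotProduct_smul, dotProduct_smul]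
    have := add_nonneg (smul_nonneg ha h1) (smul_nonneg hb h2)
    simpa using this
  · rw [trace_add, trace_smul, trace_smul, hEt, hFt]
    simpa using hab

end Aux

/-- if `M(ξ)` is nonsingular and `ξ` is E-optimal, then there exists a positive
semidefinite matrix `E` with `tr(E) = 1` such that `tr(H(x) E) ≤ λ₁(M(ξ))` for all `x ∈ X`. -/
theorem stmt_2 {X : Type*} [Fintype X] [Nonempty X] {m : ℕ} (hm : 1 ≤ m)
    (H : X → Matrix (Fin m) (Fin m) ℝ) (hH : ∀ x, (H x).PosSemidef)
    (ξ : X → ℝ) (hξ : IsDesign ξ) (hns : (infoMatrix H ξ).det ≠ 0)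
    (hopt : IsEOptimal H ξ) :
    ∃ E : Matrix (Fin m) (Fin m) ℝ, E.PosSemidef ∧ E.trace = 1 ∧
      ∀ x, (H x * E).trace ≤ lamMin (infoMatrix H ξ) := by
  classical
  set lam := lamMin (infoMatrix H ξ) with hlam
  by_contra hcon
  push_neg at hcon
  -- the linear map T
  set T : Matrix (Fin m) (Fin m) ℝ → (X → ℝ) := fun E x => (H x * E).trace with hT
  -- K and L
  set K : Set (X → ℝ) := T '' Dset m with hK
  set L : Set (X → ℝ) := {y | ∀ x, y x ≤ lam} with hL
  -- a distinguished element of Dset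
  set i0 : Fin m := ⟨0, hm⟩ with hi0
  set w0 : Fin m → ℝ := Pi.single i0 1 with hw0
  have hw0unit : w0 ⬝ᵥ w0 = 1 := by
    simp [hw0, single_dotProduct, Pi.single_eq_same]
  have hWmem : ∀ w : Fin m → ℝ, w ⬝ᵥ w = 1 → vecMulVec w w ∈ Dset m := by
    intro w hw
    exact ⟨vecMulVec_posSemidef w, by rw [vecMulVec_trace, hw]⟩
  have hDne : (Dset m).Nonempty := ⟨vecMulVec w0 w0, hWmem w0 hw0unit⟩
  -- K is compact and convex
  have hTlin : ∀ (a b : ℝ) (E F : Matrix (Fin m) (Fin m) ℝ),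
      T (a • E + b • F) = a • T E + b • T F := by
    intro a b E F
    funext x
    simp only [hT, Matrix.mul_add, Matrix.mul_smul, trace_add, trace_smul, Pi.add_apply,
      Pi.smul_apply, smul_eq_mul]
  have hTcont : Continuous T := by
    rw [continuous_pi_iff]
    intro x
    exact (continuous_const.matrix_mul continuous_id).matrix_trace
  have hKcompact : IsCompact K := Dset_isCompact.image hTcont
  have hKconvex : Convex ℝ K := by
    rintro y1 ⟨E1, hE1, rfl⟩ y2 ⟨E2, hE2, rfl⟩ a b ha hb hab
    exact ⟨a • E1 + b • E2, Dset_convex hE1 hE2 ha hb hab, hTlin a b E1 E2⟩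
  have hLconvex : Convex ℝ L := by
    rintro y1 hy1 y2 hy2 a b ha hb hab
    intro x
    have := add_le_add (mul_le_mul_of_nonneg_left (hy1 x) ha)
      (mul_le_mul_of_nonneg_left (hy2 x) hb)
    calc a * y1 x + b * y2 x ≤ a * lam + b * lam := this
      _ = lam := by rw [← add_mul, hab, one_mul]
  have hLclosed : IsClosed L := by
    have : L = ⋂ x : X, {y : X → ℝ | y x ≤ lam} := by ext y; simp [hL]
    rw [this]
    exact isClosed_iInter fun x => isClosed_le (continuous_apply x) continuous_const
  have hdisj : Disjoint K L := by
    rw [Set.disjoint_left]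
    rintro y ⟨E, hE, rfl⟩ hyL
    obtain ⟨x, hx⟩ := hcon E hE.1 hE.2
    exact absurd (hyL x) (not_le.mpr hx)
  obtain ⟨f, u, v, hfK, huv, hfL⟩ :=
    geometric_hahn_banach_compact_closed hKconvex hKcompact hLconvex hLclosed hdisj
  -- coefficients
  set c : X → ℝ := fun x => f (Pi.single x 1) with hc
  have hf_eq : ∀ y : X → ℝ, f y = ∑ x, y x * c x := by
    intro y
    have hy : y = ∑ x, y x • (Pi.single x 1 : X → ℝ) := by
      funext j
      simp [Pi.single_apply, Finset.sum_apply]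
    calc f y = f (∑ x, y x • (Pi.single x 1 : X → ℝ)) := by rw [← hy]
      _ = ∑ x, y x * c x := by
          rw [map_sum]
          exact Finset.sum_congr rfl fun x _ => by rw [_root_.map_smul]; rfl
  have hconstL : (fun _ : X => lam) ∈ L := fun x => le_refl lam
  have hflam : v < ∑ x, lam * c x := by
    have := hfL _ hconstL
    rwa [hf_eq] at this
  -- each c x ≤ 0
  have hcnonpos : ∀ x, c x ≤ 0 := by
    intro x
    by_contra hpos
    push_neg at hpos
    set t : ℝ := ((∑ x', lam * c x') - v) / c x with ht
    have htpos : 0 ≤ t := le_of_lt (div_pos (by linarith) hpos)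
    have hmem : (fun x' => lam) - t • (Pi.single x 1 : X → ℝ) ∈ L := by
      intro x'
      simp only [Pi.sub_apply, Pi.smul_apply, smul_eq_mul]
      have : 0 ≤ t * (Pi.single x 1 : X → ℝ) x' := by
        apply mul_nonneg htpos
        rcases eq_or_ne x x' with rfl | h
        · simp
        · simp [Pi.single_apply, h]
      linarith
    have := hfL _ hmem
    rw [hf_eq] at this
    have hexp : ∑ x', (((fun _ => lam) - t • (Pi.single x 1 : X → ℝ) : X → ℝ)) x' * c x' =
        (∑ x', lam * c x') - t * c x := by
      have hterm : ∀ x', (((fun _ => lam) - t • (Pi.single x 1 : X → ℝ) : X → ℝ)) x' * c x' =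
          lam * c x' - t * ((Pi.single x 1 : X → ℝ) x' * c x') := by
        intro x'
        simp only [Pi.sub_apply, Pi.smul_apply, smul_eq_mul]
        ring
      rw [Finset.sum_congr rfl fun x' _ => hterm x', Finset.sum_sub_distrib, ← Finset.mul_sum]
      congr 2
      rw [Finset.sum_eq_single x (fun b _ hb => by simp [Pi.single_apply, hb])
        (fun h => absurd (Finset.mem_univ x) h)]
      simp
    rw [hexp] at this
    have hts : t * c x = (∑ x', lam * c x') - v := by
      rw [ht, div_mul_cancel₀ _ (ne_of_gt hpos)]
    rw [hts] at this
    linarith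
  -- the total mass is negative
  have hsumneg : ∑ x, c x < 0 := by
    rcases lt_or_eq_of_le (Finset.sum_nonpos fun x _ => hcnonpos x) with h | h
    · exact h
    · exfalso
      have hall : ∀ x ∈ Finset.univ, c x = 0 := by
        intro x hx
        have := (Finset.sum_eq_zero_iff_of_nonpos fun x _ => hcnonpos x).mp h
        exact this x hx
      obtain ⟨E0, hE0⟩ := hDne
      have h1 : f (T E0) < u := hfK _ ⟨E0, hE0, rfl⟩
      rw [hf_eq] at h1
      have h2 : ∑ x, T E0 x * c x = 0 :=
        Finset.sum_eq_zero fun x hx => by rw [hall x hx, mul_zero]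
      have h3 : ∑ x, lam * c x = 0 :=
        Finset.sum_eq_zero fun x hx => by rw [hall x hx, mul_zero]
      rw [h2] at h1
      rw [h3] at hflam
      linarith
  set s : ℝ := -∑ x, c x with hs
  have hspos : 0 < s := by rw [hs]; linarith
  -- the dual design μ
  set μ : X → ℝ := fun x => -c x / s with hμ
  have hμdesign : IsDesign μ := by
    constructor
    · intro x
      exact div_nonneg (by linarith [hcnonpos x]) (le_of_lt hspos)
    · rw [← Finset.sum_div]
      rw [div_eq_one_iff_eq (ne_of_gt hspos)]
      rw [hs, ← Finset.sum_neg_distrib]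
  have hcμ : ∀ x, c x = -(s * μ x) := by
    intro x
    rw [hμ]
    field_simp
  -- the key uniform bound on tr(M(μ) E) for E in Dset
  have htraceμ : ∀ E : Matrix (Fin m) (Fin m) ℝ,
      (infoMatrix H μ * E).trace = ∑ x, μ x * (H x * E).trace := by
    intro E
    rw [infoMatrix, Finset.sum_mul]
    rw [trace_sum]
    exact Finset.sum_congr rfl fun x _ => by rw [smul_mul_assoc, trace_smul, smul_eq_mul]
  have hkey : ∀ E ∈ Dset m, -u / s < (infoMatrix H μ * E).trace := by
    intro E hE
    have h1 : f (T E) < u := hfK _ ⟨E, hE, rfl⟩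
    rw [hf_eq] at h1
    have h2 : ∑ x, T E x * c x = -(s * (infoMatrix H μ * E).trace) := by
      rw [htraceμ, Finset.mul_sum, ← Finset.sum_neg_distrib]
      exact Finset.sum_congr rfl fun x _ => by rw [hcμ x]; ring
    rw [h2] at h1
    rw [div_lt_iff₀ hspos]
    nlinarith
  -- lam < -u/s
  have hlamlt : lam < -u / s := by
    have h3 : ∑ x, lam * c x = -(s * lam) := by
      rw [← Finset.mul_sum]
      rw [hs]
      ring_nf
    rw [h3] at hflam
    rw [lt_div_iff₀ hspos]
    nlinarith
  -- lamMin of M(μ) is ≥ -u/s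
  have hlb : -u / s ≤ lamMin (infoMatrix H μ) := by
    apply le_csInf
    · exact ⟨w0 ⬝ᵥ (infoMatrix H μ *ᵥ w0), w0, hw0unit, rfl⟩
    · rintro r ⟨w, hw, rfl⟩
      have := hkey (vecMulVec w w) (hWmem w hw)
      rw [trace_mul_vecMulVec] at this
      exact le_of_lt this
  have hub := hopt.2 μ hμdesign
  rw [← hlam] at hub
  linarith
end

section
/- Let H and E be real symmetric positive semidefinite m×m matrices and let K be a real symmetric positive definite m×m matrix. Then tr(H E) ≤ tr(H K⁻¹) · tr(K E). -/
open Matrix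
open scoped MatrixOrder

open Finset in
lemma frob_submul {m : ℕ} (A B : Matrix (Fin m) (Fin m) ℝ) :
    ((A * B)ᵀ * (A * B)).trace ≤ (Aᵀ * A).trace * (Bᵀ * B).trace := by
  have htr : ∀ C : Matrix (Fin m) (Fin m) ℝ,
      (Cᵀ * C).trace = ∑ j, ∑ i, (C i j) ^ 2 := by
    intro C
    simp [Matrix.trace, Matrix.mul_apply, Matrix.diag, sq]
  rw [htr, htr, htr]
  calc ∑ j, ∑ i, ((A * B) i j) ^ 2
      ≤ ∑ j, ∑ i, (∑ l, (A i l) ^ 2) * (∑ l, (B l j) ^ 2) := by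
        refine Finset.sum_le_sum fun j _ => Finset.sum_le_sum fun i _ => ?_
        simpa [Matrix.mul_apply] using
          Finset.sum_mul_sq_le_sq_mul_sq Finset.univ (fun l => A i l) (fun l => B l j)
    _ = (∑ l, ∑ i, (A i l) ^ 2) * (∑ j, ∑ l, (B l j) ^ 2) := by
        rw [Finset.sum_comm, ← Finset.sum_mul_sum]
        congr 1
        exact Finset.sum_comm

lemma trace_sym_prod {m : ℕ} (x y : Matrix (Fin m) (Fin m) ℝ)
    (hx : xᵀ = x) (hy : yᵀ = y) :
    (x * x * (y * y)).trace = ((x * y)ᵀ * (x * y)).trace := by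
  rw [Matrix.transpose_mul, hx, hy]
  rw [show y * x * (x * y) = y * (x * x * y) from by noncomm_ring]
  rw [Matrix.trace_mul_comm y (x * x * y)]
  rw [show x * x * y * y = x * x * (y * y) from by noncomm_ring]

/-- for real positive semidefinite `H`, `E` and positive definite `K`,
`tr(H E) ≤ tr(H K⁻¹) ⬝ tr(K E)`. -/
theorem stmt_11 {m : ℕ} (H E K : Matrix (Fin m) (Fin m) ℝ)
    (hH : H.PosSemidef) (hE : E.PosSemidef) (hK : K.PosDef) :
    (H * E).trace ≤ (H * K⁻¹).trace * (K * E).trace := by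
  set a := CFC.sqrt H with ha
  set e := CFC.sqrt E with he
  set k := CFC.sqrt K with hk
  have haH : a * a = H := CFC.sqrt_mul_sqrt_self H hH.nonneg
  have heE : e * e = E := CFC.sqrt_mul_sqrt_self E hE.nonneg
  have hkK : k * k = K := CFC.sqrt_mul_sqrt_self K hK.posSemidef.nonneg
  have hat : aᵀ = a := by
    have := (CFC.sqrt_nonneg H).posSemidef.1
    simpa [Matrix.IsHermitian] using this
  have het : eᵀ = e := by
    have := (CFC.sqrt_nonneg E).posSemidef.1
    simpa [Matrix.IsHermitian] using this
  have hkt : kᵀ = k := by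
    have := (CFC.sqrt_nonneg K).posSemidef.1
    simpa [Matrix.IsHermitian] using this
  have hdetK : K.det ≠ 0 := hK.det_pos.ne'
  have hdetk : k.det ≠ 0 := by
    intro h
    apply hdetK
    rw [← hkK, Matrix.det_mul, h, mul_zero]
  have hkinv : k⁻¹ * k = 1 := Matrix.nonsing_inv_mul k (by simpa using hdetk)
  have hKinv : K⁻¹ = k⁻¹ * k⁻¹ := by
    rw [← hkK, Matrix.mul_inv_rev]
  have hkit : (k⁻¹)ᵀ = k⁻¹ := by rw [Matrix.transpose_nonsing_inv, hkt]
  have h1 : (H * E).trace = ((a * e)ᵀ * (a * e)).trace := by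
    rw [← haH, ← heE]; exact trace_sym_prod a e hat het
  have h2 : (H * K⁻¹).trace = ((a * k⁻¹)ᵀ * (a * k⁻¹)).trace := by
    rw [← haH, hKinv]; exact trace_sym_prod a k⁻¹ hat hkit
  have h3 : (K * E).trace = ((k * e)ᵀ * (k * e)).trace := by
    rw [← hkK, ← heE]; exact trace_sym_prod k e hkt het
  have h4 : a * e = (a * k⁻¹) * (k * e) := by
    rw [show (a * k⁻¹) * (k * e) = a * (k⁻¹ * k) * e from by noncomm_ring, hkinv,
      Matrix.mul_one]
  rw [h1, h2, h3, h4]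
  exact frob_submul (a * k⁻¹) (k * e)
end

section
/- Let H and E be real symmetric positive semidefinite m×m matrices and let K be a real symmetric positive definite m×m matrix. If tr(K E) > 0 and tr(H E) ≥ tr(K E), then tr(H K⁻¹) ≥ 1. -/
open Matrix

section aux

variable {m : ℕ}

lemma aux_trace_psd_nonneg (A : Matrix (Fin m) (Fin m) ℝ) (hA : A.PosSemidef) :
    0 ≤ A.trace := by
  obtain ⟨B, rfl⟩ := (open scoped MatrixOrder in ⟨CFC.sqrt A, by open scoped MatrixOrder in rw [(CFC.sqrt_nonneg A).posSemidef.isHermitian.eq, CFC.sqrt_mul_sqrt_self A (Matrix.nonneg_iff_posSemidef.mpr hA)]⟩ : ∃ B : Matrix (Fin m) (Fin m) ℝ, A = Bᴴ * B)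
  rw [Matrix.trace]
  refine Finset.sum_nonneg fun i _ => ?_
  simp only [Matrix.diag_apply, Matrix.mul_apply, Matrix.conjTranspose_apply]
  exact Finset.sum_nonneg fun j _ => by simp [mul_self_nonneg]

lemma aux_trace_mul_nonneg (A B : Matrix (Fin m) (Fin m) ℝ)
    (hA : A.PosSemidef) (hB : B.PosSemidef) : 0 ≤ (A * B).trace := by
  obtain ⟨C, rfl⟩ := (open scoped MatrixOrder in ⟨CFC.sqrt B, by open scoped MatrixOrder in rw [(CFC.sqrt_nonneg B).posSemidef.isHermitian.eq, CFC.sqrt_mul_sqrt_self B (Matrix.nonneg_iff_posSemidef.mpr hB)]⟩ : ∃ C : Matrix (Fin m) (Fin m) ℝ, B = Cᴴ * C)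
  have h : (A * (Cᴴ * C)).trace = (C * A * Cᴴ).trace := by
    rw [← Matrix.mul_assoc, Matrix.trace_mul_cycle]
  rw [h]
  exact aux_trace_psd_nonneg _ (hA.mul_mul_conjTranspose_same C)

lemma aux_dotProduct_le (A : Matrix (Fin m) (Fin m) ℝ) (hA : A.PosSemidef)
    (x : Fin m → ℝ) : x ⬝ᵥ A *ᵥ x ≤ A.trace * (x ⬝ᵥ x) := by
  obtain ⟨C, rfl⟩ := (open scoped MatrixOrder in ⟨CFC.sqrt A, by open scoped MatrixOrder in rw [(CFC.sqrt_nonneg A).posSemidef.isHermitian.eq, CFC.sqrt_mul_sqrt_self A (Matrix.nonneg_iff_posSemidef.mpr hA)]⟩ : ∃ B : Matrix (Fin m) (Fin m) ℝ, A = Bᴴ * B)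
  have h1 : x ⬝ᵥ (Cᴴ * C) *ᵥ x = (C *ᵥ x) ⬝ᵥ (C *ᵥ x) := by
    rw [← Matrix.mulVec_mulVec, Matrix.dotProduct_mulVec, Matrix.vecMul_conjTranspose]
    simp [dotProduct_comm]
  rw [h1]
  have h2 : ∀ i, (C *ᵥ x) i * (C *ᵥ x) i ≤ (∑ j, C i j ^ 2) * (x ⬝ᵥ x) := by
    intro i
    have := Finset.sum_mul_sq_le_sq_mul_sq Finset.univ (fun j => C i j) x
    simpa [Matrix.mulVec, dotProduct, ← sq] using this
  calc (C *ᵥ x) ⬝ᵥ (C *ᵥ x) ≤ ∑ i, (∑ j, C i j ^ 2) * (x ⬝ᵥ x) :=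
        Finset.sum_le_sum fun i _ => h2 i
    _ = (Cᴴ * C).trace * (x ⬝ᵥ x) := by
        rw [← Finset.sum_mul, Matrix.trace]
        congr 1
        rw [Finset.sum_comm]
        exact Finset.sum_congr rfl fun j _ => by
          simp [Matrix.mul_apply, Matrix.diag_apply, sq]

lemma aux_trace_smul_sub_psd (A : Matrix (Fin m) (Fin m) ℝ) (hA : A.PosSemidef) :
    (A.trace • (1 : Matrix (Fin m) (Fin m) ℝ) - A).PosSemidef := by
  rw [Matrix.posSemidef_iff_dotProduct_mulVec]
  constructor
  · have h1 : (A.trace • (1 : Matrix (Fin m) (Fin m) ℝ)).IsHermitian := by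
      simp [Matrix.IsHermitian, Matrix.conjTranspose_smul]
    exact h1.sub hA.isHermitian
  · intro x
    have := aux_dotProduct_le A hA x
    simp only [Matrix.sub_mulVec, Matrix.smul_mulVec, Matrix.one_mulVec,
      dotProduct_sub, dotProduct_smul]
    simpa using sub_nonneg.mpr this

lemma aux_trace_mul_le (A B : Matrix (Fin m) (Fin m) ℝ)
    (hA : A.PosSemidef) (hB : B.PosSemidef) :
    (A * B).trace ≤ A.trace * B.trace := by
  have h := aux_trace_mul_nonneg _ _ (aux_trace_smul_sub_psd A hA) hB
  have : (A.trace • (1 : Matrix (Fin m) (Fin m) ℝ) - A) * B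
      = A.trace • B - A * B := by
    rw [Matrix.sub_mul, Matrix.smul_mul, Matrix.one_mul]
  rw [this, Matrix.trace_sub, Matrix.trace_smul] at h
  simpa using sub_nonneg.mp h

end aux

/-- for real positive semidefinite `H`, `E` and positive definite `K`, if
`tr(K E) > 0` and `tr(H E) ≥ tr(K E)`, then `tr(H K⁻¹) ≥ 1`. -/
theorem stmt_12 {m : ℕ} (H E K : Matrix (Fin m) (Fin m) ℝ)
    (hH : H.PosSemidef) (hE : E.PosSemidef) (hK : K.PosDef)
    (htr : 0 < (K * E).trace) (hge : (K * E).trace ≤ (H * E).trace) :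
    1 ≤ (H * K⁻¹).trace := by
  have hKinv : (K⁻¹).PosDef := hK.inv
  open scoped MatrixOrder in set S := CFC.sqrt (K⁻¹) with hSdef
  have hSpsd : S.PosSemidef := (open scoped MatrixOrder in (CFC.sqrt_nonneg (K⁻¹)).posSemidef)
  have hSherm : S.IsHermitian := hSpsd.isHermitian
  have hSS : S * S = K⁻¹ := (open scoped MatrixOrder in CFC.sqrt_mul_sqrt_self (K⁻¹) hKinv.posSemidef.nonneg)
  have hdetS : IsUnit S.det := by
    have hd : S.det * S.det = (K⁻¹).det := by rw [← Matrix.det_mul, hSS]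
    have : (K⁻¹).det ≠ 0 := hKinv.det_pos.ne'
    refine isUnit_iff_ne_zero.mpr fun h => this ?_
    rw [← hd, h, mul_zero]
  have hSmulinv : S * S⁻¹ = 1 := Matrix.mul_nonsing_inv S hdetS
  have hSinvmul : S⁻¹ * S = 1 := Matrix.nonsing_inv_mul S hdetS
  have hSinvherm : (S⁻¹).IsHermitian := hSherm.inv
  have hSinvSinv : S⁻¹ * S⁻¹ = K := by
    rw [← Matrix.mul_inv_rev, hSS, Matrix.nonsing_inv_nonsing_inv K (isUnit_iff_ne_zero.mpr hK.det_pos.ne')]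
  have hApsd : (S * H * S).PosSemidef := by
    have := hH.mul_mul_conjTranspose_same S
    rwa [hSherm.eq] at this
  have hBpsd : (S⁻¹ * E * S⁻¹).PosSemidef := by
    have := hE.mul_mul_conjTranspose_same S⁻¹
    rwa [hSinvherm.eq] at this
  have trA : (S * H * S).trace = (H * K⁻¹).trace := by
    rw [Matrix.trace_mul_cycle, hSS, Matrix.trace_mul_comm]
  have trB : (S⁻¹ * E * S⁻¹).trace = (K * E).trace := by
    rw [Matrix.trace_mul_cycle, hSinvSinv]
  have trAB : ((S * H * S) * (S⁻¹ * E * S⁻¹)).trace = (H * E).trace := by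
    have h1 : (S * H * S) * (S⁻¹ * E * S⁻¹) = S * (H * E) * S⁻¹ := by
      simp only [Matrix.mul_assoc]
      rw [← Matrix.mul_assoc S S⁻¹ _, hSmulinv, Matrix.one_mul]
    rw [h1, Matrix.trace_mul_comm, ← Matrix.mul_assoc, hSinvmul, Matrix.one_mul]
  have key : (H * E).trace ≤ (H * K⁻¹).trace * (K * E).trace := by
    rw [← trA, ← trB, ← trAB]
    exact aux_trace_mul_le _ _ hApsd hBpsd
  exact (le_mul_iff_one_le_left htr).mp (le_trans hge key)
end

section
/- Let m ≥ 1, let λ_1 ≤ λ_2 ≤ … ≤ λ_m be real numbers with λ_1 > 0, let h > λ_1, and let c_1, …, c_m ≥ 0. Define g_h(y) = Σ_{i=1}^m c_i / ((λ_i − h) y + λ_1) for y ∈ [0, λ_1/(h − λ_1)). If h · Σ_{i=1}^m c_i ≥ Σ_{i=1}^m c_i λ_i, then g_h(y) ≥ g_h(0) for every y ∈ [0, λ_1/(h − λ_1)); that is, the minimum of g_h over this interval is attained at y = 0. -/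
open BigOperators

/-- for `λ₁ ≤ … ≤ λ_m` with `λ₁ > 0`, `h > λ₁` and `c₁, …, c_m ≥ 0`, define
`g_h(y) = ∑ i, cᵢ / ((λᵢ - h) y + λ₁)` on `[0, λ₁ / (h - λ₁))`. If
`h ∑ i, cᵢ ≥ ∑ i, cᵢ λᵢ`, then `g_h(y) ≥ g_h(0)` for every `y` in the interval, i.e. the
minimum of `g_h` over the interval is attained at `y = 0`. -/
theorem stmt_13 {m : ℕ} (hm : 0 < m) (lam : Fin m → ℝ) (hmono : Monotone lam)
    (hpos : 0 < lam ⟨0, hm⟩) (h : ℝ) (hh : lam ⟨0, hm⟩ < h)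
    (c : Fin m → ℝ) (hc : ∀ i, 0 ≤ c i)
    (g : ℝ → ℝ)
    (hg : ∀ y : ℝ, g y = ∑ i, c i / ((lam i - h) * y + lam ⟨0, hm⟩))
    (hcrit : ∑ i, c i * lam i ≤ h * ∑ i, c i) :
    ∀ y ∈ Set.Ico (0 : ℝ) (lam ⟨0, hm⟩ / (h - lam ⟨0, hm⟩)), g 0 ≤ g y := by
  intro y hy
  obtain ⟨hy0, hy1⟩ := hy
  set l1 : ℝ := lam ⟨0, hm⟩ with hl1
  have hyb : y * (h - l1) < l1 := (lt_div_iff₀ (by linarith)).mp hy1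
  -- positivity of denominators
  have hD : ∀ i : Fin m, 0 < (lam i - h) * y + l1 := by
    intro i
    have h1 : l1 ≤ lam i := hmono (by simp [Fin.le_def])
    rcases le_or_gt h (lam i) with hcase | hcase
    · nlinarith [mul_nonneg (sub_nonneg.mpr hcase) hy0]
    · nlinarith [mul_nonneg hy0 (sub_nonneg.mpr h1)]
  -- pointwise key inequality
  have key : ∀ i : Fin m,
      c i / l1 + y * (c i * (h - lam i)) / l1 ^ 2 ≤ c i / ((lam i - h) * y + l1) := by
    intro i
    have hDi := hD i
    rw [div_add_div _ _ (by positivity) (by positivity), div_le_div_iff₀ (by positivity) hDi]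
    nlinarith [mul_nonneg (hc i) (sq_nonneg (y * (h - lam i))), hpos, sq_nonneg l1]
  rw [hg 0, hg y]
  simp only [mul_zero, zero_add]
  calc ∑ i, c i / l1
      ≤ ∑ i, (c i / l1 + y * (c i * (h - lam i)) / l1 ^ 2) := by
        rw [Finset.sum_add_distrib]
        have hsum : 0 ≤ ∑ i, y * (c i * (h - lam i)) / l1 ^ 2 := by
          rw [← Finset.sum_div]
          apply div_nonneg _ (by positivity)
          have : ∑ i, y * (c i * (h - lam i)) = y * (h * ∑ i, c i - ∑ i, c i * lam i) := by
            rw [Finset.mul_sum, ← Finset.sum_sub_distrib, Finset.mul_sum]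
            apply Finset.sum_congr rfl
            intro i _
            ring
          rw [this]
          exact mul_nonneg hy0 (by linarith)
        linarith
    _ ≤ ∑ i, c i / ((lam i - h) * y + l1) := Finset.sum_le_sum fun i _ => key i
end
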